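/- arXiv:math/0411470 — 2 statements merged into one kernel-verified Lean document; each statement's English description precedes it below -/
import Mathlib

section
/- Let G be a Garside group with positive monoid G⁺ and Garside element Δ, let g ∈ G and n ≥ 1. Suppose r is the greatest element of {t ∈ ℤ : Δ^t ≤_L h for some conjugate h of g}, m is the greatest element of {t ∈ ℤ : Δ^t ≤_L h for some conjugate h of gⁿ}, s is the least element of {t ∈ ℤ : h ≤_L Δ^t for some conjugate h of g}, and u is the least element of {t ∈ ℤ : h ≤_L Δ^t for some conjugate h of gⁿ}. Then r = ⌊m/n⌋ and s = ⌈u/n⌉. In particular, r ≥ 0 if and only if m ≥ 0, and s ≤ 0 if and only if u ≤ 0. -/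
/-!
If `Δ ^ q ≤ h` then `Δ ^ (q * n) ≤ h ^ n`, because conjugation by `Δ` preserves the positive
monoid. Conversely, if `Δ ^ (q * n) ≤ x ^ n`, the meet `c` of `x ^ i * Δ ^ (-q * i)`, `i < n`, in
the lattice `(G, ≤_L)` satisfies `Δ ^ q ≤ c⁻¹ * x * c`. Hence `q` lies in the summit-infimum set
of `g` iff `q * n` lies in that of `g ^ n`, which pins down `inf_s g = ⌊inf_s (g ^ n) / n⌋`. The
supremum follows by applying this to `g⁻¹`, since `h ≤ Δ ^ t` iff `Δ ^ (-t) ≤ h⁻¹`.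
-/

/-- `a` left-divides `b` in the monoid `M`. -/
def dvdL {M : Type*} [Monoid M] (a b : M) : Prop := ∃ c, a * c = b

/-- `a` right-divides `b` in the monoid `M`. -/
def dvdR {M : Type*} [Monoid M] (a b : M) : Prop := ∃ c, c * a = b

/-- `L(a)`, the set of left divisors of `a`. -/
def Lset {M : Type*} [Monoid M] (a : M) : Set M := {x | dvdL x a}

/-- `R(a)`, the set of right divisors of `a`. -/
def Rset {M : Type*} [Monoid M] (a : M) : Set M := {x | dvdR x a}

/-- `a` is an atom: `a ≠ 1` and `a = b * c` implies `b = 1` or `c = 1`. -/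
def IsAtomElt {M : Type*} [Monoid M] (a : M) : Prop :=
  a ≠ 1 ∧ ∀ b c : M, a = b * c → b = 1 ∨ c = 1

/-- `M` is atomic: every element is a finite product of atoms, and the lengths of
expressions of a given element as products of atoms are bounded above. -/
def Atomic (M : Type*) [Monoid M] : Prop :=
  (∀ a : M, ∃ l : List M, (∀ x ∈ l, IsAtomElt x) ∧ l.prod = a) ∧
  (∀ a : M, ∃ N : ℕ, ∀ l : List M, (∀ x ∈ l, IsAtomElt x) → l.prod = a → l.length ≤ N)

/-- `Δ` is a Garside element: `L(Δ) = R(Δ)` and `L(Δ)` generates `M`. -/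
def IsGarsideElt {M : Type*} [Monoid M] (Δ : M) : Prop :=
  Lset Δ = Rset Δ ∧ Submonoid.closure (Lset Δ) = ⊤

/-- `d` is a greatest common lower bound of `a` and `b` with respect to `≤_L`. -/
def IsGlbL {M : Type*} [Monoid M] (a b d : M) : Prop :=
  dvdL d a ∧ dvdL d b ∧ ∀ c : M, dvdL c a → dvdL c b → dvdL c d

/-- `d` is a least common upper bound of `a` and `b` with respect to `≤_L`. -/
def IsLubL {M : Type*} [Monoid M] (a b d : M) : Prop :=
  dvdL a d ∧ dvdL b d ∧ ∀ c : M, dvdL a c → dvdL b c → dvdL d c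

/-- `d` is a greatest common lower bound of `a` and `b` with respect to `≤_R`. -/
def IsGlbR {M : Type*} [Monoid M] (a b d : M) : Prop :=
  dvdR d a ∧ dvdR d b ∧ ∀ c : M, dvdR c a → dvdR c b → dvdR c d

/-- `d` is a least common upper bound of `a` and `b` with respect to `≤_R`. -/
def IsLubR {M : Type*} [Monoid M] (a b d : M) : Prop :=
  dvdR a d ∧ dvdR b d ∧ ∀ c : M, dvdR a c → dvdR b c → dvdR d c

/-- `M` is a Garside monoid: finitely generated, left and right cancellative, atomic,
`≤_L`- and `≤_R`-lattice conditions, and it possesses a Garside element. -/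
def IsGarsideMonoid (M : Type*) [Monoid M] : Prop :=
  (∃ S : Set M, S.Finite ∧ Submonoid.closure S = ⊤) ∧
  (∀ a b c : M, a * b = a * c → b = c) ∧
  (∀ a b c : M, b * a = c * a → b = c) ∧
  Atomic M ∧
  (∀ a b : M, ∃ d, IsGlbL a b d) ∧
  (∀ a b : M, ∃ d, IsLubL a b d) ∧
  (∀ a b : M, ∃ d, IsGlbR a b d) ∧
  (∀ a b : M, ∃ d, IsLubR a b d) ∧
  (∃ Δ : M, IsGarsideElt Δ)

/-- Group-level left divisibility: `a ≤_L b` iff `a⁻¹ * b` is positive. -/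
def gdvdL {G : Type*} [Group G] (P : Submonoid G) (a b : G) : Prop := a⁻¹ * b ∈ P

/-- Group-level right divisibility: `a ≤_R b` iff `b * a⁻¹` is positive. -/
def gdvdR {G : Type*} [Group G] (P : Submonoid G) (a b : G) : Prop := b * a⁻¹ ∈ P

/-- `G` is a Garside group with positive monoid `P` and chosen Garside element `Δ`:
`P` is a Garside monoid, every element of `G` is a fraction `a * b⁻¹` of positive
elements, and `Δ` is a Garside element of `P`. -/
def IsGarsideGroup {G : Type*} [Group G] (P : Submonoid G) (Δ : G) : Prop :=
  IsGarsideMonoid P ∧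
  (∀ g : G, ∃ a b : P, g = (a : G) * (b : G)⁻¹) ∧
  ∃ hΔ : Δ ∈ P, IsGarsideElt (⟨Δ, hΔ⟩ : P)

lemma dvdL_iff_dvd {M : Type*} [Monoid M] {a b : M} : dvdL a b ↔ a ∣ b :=
  exists_congr fun _ => eq_comm

lemma IsGlbL.mul_left {M : Type*} [Monoid M] (hcancel : ∀ a b c : M, a * b = a * c → b = c)
    (hglb : ∀ a b : M, ∃ d, IsGlbL a b d) {a b d : M} (h : IsGlbL a b d) (w : M) :
    IsGlbL (w * a) (w * b) (w * d) := by
  simp only [IsGlbL, dvdL_iff_dvd] at h hglb ⊢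
  obtain ⟨hda, hdb, hd⟩ := h
  obtain ⟨D, hDa, hDb, hD⟩ := hglb (w * a) (w * b)
  obtain ⟨E, rfl⟩ := hD w (dvd_mul_right w a) (dvd_mul_right w b)
  have hEa : E ∣ a := by
    obtain ⟨k, hk⟩ := hDa
    exact ⟨k, hcancel w _ _ (by rw [hk, mul_assoc])⟩
  have hEb : E ∣ b := by
    obtain ⟨k, hk⟩ := hDb
    exact ⟨k, hcancel w _ _ (by rw [hk, mul_assoc])⟩
  refine ⟨mul_dvd_mul_left w hda, mul_dvd_mul_left w hdb, fun c hca hcb => ?_⟩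
  exact (hD c hca hcb).trans (mul_dvd_mul_left w (hd E hEa hEb))

section GarsideGroup

variable {G : Type*} [Group G] {P : Submonoid G} {Δ : G}

lemma gdvdL_refl (a : G) : gdvdL P a a := by
  simp [gdvdL]

lemma gdvdL.trans {a b c : G} (hab : gdvdL P a b) (hbc : gdvdL P b c) : gdvdL P a c := by
  simpa [gdvdL, mul_assoc] using mul_mem hab hbc

lemma gdvdL_mul_left_iff (x : G) {a b : G} : gdvdL P (x * a) (x * b) ↔ gdvdL P a b := by
  simp [gdvdL, mul_assoc]

lemma gdvdL_coe_iff {p q : P} : gdvdL P p q ↔ dvdL p q := by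
  refine ⟨fun h => ⟨⟨_, h⟩, Subtype.ext (by simp)⟩, ?_⟩
  rintro ⟨c, rfl⟩
  simp [gdvdL]

/-- For `x ∈ L(Δ)` the complement `c` with `x * c = Δ` lies in `R(Δ) = L(Δ)`, so
`x * Δ = Δ * e` for some positive `e`; symmetrically for `Δ * x * Δ⁻¹`. -/
lemma conj_mem_of_isGarsideElt (hΔ : Δ ∈ P) (hGar : IsGarsideElt (⟨Δ, hΔ⟩ : P)) {p : G}
    (hp : p ∈ P) : Δ⁻¹ * p * Δ ∈ P ∧ Δ * p * Δ⁻¹ ∈ P := by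
  obtain ⟨hLR, hgen⟩ := hGar
  let conjInv : P →* G := (MulAut.conj Δ⁻¹).toMonoidHom.comp P.subtype
  let conj : P →* G := (MulAut.conj Δ).toMonoidHom.comp P.subtype
  have hInv : Submonoid.closure (Lset (⟨Δ, hΔ⟩ : P)) ≤ P.comap conjInv := by
    refine Submonoid.closure_le.2 fun x ⟨c, hxc⟩ => ?_
    obtain ⟨e, hce⟩ : c ∈ Lset (⟨Δ, hΔ⟩ : P) := hLR ▸ ⟨x, hxc⟩
    have hxc : (x : G) * c = Δ := congrArg Subtype.val hxc
    have hce : (c : G) * e = Δ := congrArg Subtype.val hce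
    have : Δ⁻¹ * x * Δ = e := by
      rw [eq_inv_mul_of_mul_eq hce, eq_inv_mul_of_mul_eq hxc]; group
    simp [conjInv, this]
  have hConj : Submonoid.closure (Lset (⟨Δ, hΔ⟩ : P)) ≤ P.comap conj := by
    refine Submonoid.closure_le.2 fun x hx => ?_
    obtain ⟨c, hcx⟩ : x ∈ Rset (⟨Δ, hΔ⟩ : P) := hLR ▸ hx
    obtain ⟨e, hec⟩ : c ∈ Rset (⟨Δ, hΔ⟩ : P) := hLR ▸ ⟨x, hcx⟩
    have hcx : (c : G) * x = Δ := congrArg Subtype.val hcx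
    have hec : (e : G) * c = Δ := congrArg Subtype.val hec
    have : Δ * x * Δ⁻¹ = e := by
      rw [eq_mul_inv_of_mul_eq hec, eq_mul_inv_of_mul_eq hcx]; group
    simp [conj, this]
  rw [hgen] at hInv hConj
  exact ⟨by simpa [conjInv] using hInv (Submonoid.mem_top ⟨p, hp⟩),
    by simpa [conj] using hConj (Submonoid.mem_top ⟨p, hp⟩)⟩

lemma zpow_mul_mul_zpow_neg_mem (hΔ : Δ ∈ P) (hGar : IsGarsideElt (⟨Δ, hΔ⟩ : P)) (k : ℤ)
    {p : G} (hp : p ∈ P) : Δ ^ k * p * Δ ^ (-k) ∈ P := by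
  induction k using Int.induction_on with
  | zero => simpa using hp
  | succ i ih =>
    have h := (conj_mem_of_isGarsideElt hΔ hGar ih).2
    rwa [show Δ * (Δ ^ (i : ℤ) * p * Δ ^ (-(i : ℤ))) * Δ⁻¹ =
      Δ ^ ((i : ℤ) + 1) * p * Δ ^ (-((i : ℤ) + 1)) by group] at h
  | pred i ih =>
    have h := (conj_mem_of_isGarsideElt hΔ hGar ih).1
    rwa [show Δ⁻¹ * (Δ ^ (-(i : ℤ)) * p * Δ ^ (-(-(i : ℤ)))) * Δ =
      Δ ^ (-(i : ℤ) - 1) * p * Δ ^ (-(-(i : ℤ) - 1)) by group] at h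

lemma zpow_mul_mul_zpow_neg_mem_iff (hG : IsGarsideGroup P Δ) (k : ℤ) {p : G} :
    Δ ^ k * p * Δ ^ (-k) ∈ P ↔ p ∈ P := by
  obtain ⟨-, -, hΔ, hGar⟩ := hG
  refine ⟨fun h => ?_, zpow_mul_mul_zpow_neg_mem hΔ hGar k⟩
  simpa [mul_assoc] using zpow_mul_mul_zpow_neg_mem hΔ hGar (-k) h

lemma gdvdL.mul_zpow_right (hG : IsGarsideGroup P Δ) {a b : G} (h : gdvdL P a b) (k : ℤ) :
    gdvdL P (a * Δ ^ k) (b * Δ ^ k) := by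
  simpa [gdvdL, mul_assoc] using (zpow_mul_mul_zpow_neg_mem_iff hG (-k)).2 h

lemma gdvdL_zpow_of_le (hG : IsGarsideGroup P Δ) {j k : ℤ} (hjk : j ≤ k) :
    gdvdL P (Δ ^ j) (Δ ^ k) := by
  obtain ⟨-, -, hΔ, -⟩ := hG
  lift k - j to ℕ using sub_nonneg.2 hjk with d hd
  rw [gdvdL, ← zpow_neg, ← zpow_add, neg_add_eq_sub, ← hd, zpow_natCast]
  exact pow_mem hΔ d

lemma gdvdL.zpow_mul_pow (hG : IsGarsideGroup P Δ) {r : ℤ} {x : G} (h : gdvdL P (Δ ^ r) x)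
    (k : ℕ) : gdvdL P (Δ ^ (r * k)) (x ^ k) := by
  induction k with
  | zero => simpa using gdvdL_refl (1 : G)
  | succ k ih =>
    have hstep : gdvdL P (x ^ k * Δ ^ r) (x ^ k * x) := (gdvdL_mul_left_iff _).2 h
    rw [pow_succ, Nat.cast_succ, mul_add_one, zpow_add]
    exact (ih.mul_zpow_right hG r).trans hstep

lemma gdvdL_zpow_iff_zpow_neg_gdvdL_inv (hG : IsGarsideGroup P Δ) {x : G} {t : ℤ} :
    gdvdL P x (Δ ^ t) ↔ gdvdL P (Δ ^ (-t)) x⁻¹ := by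
  rw [gdvdL, gdvdL, ← zpow_mul_mul_zpow_neg_mem_iff hG t]
  simp [mul_assoc]

lemma exists_mul_mem (hG : IsGarsideGroup P Δ) (a : G) : ∃ w ∈ P, w * a ∈ P := by
  obtain ⟨p, q, rfl⟩ := hG.2.1 a
  obtain ⟨d, ⟨c₁, hc₁⟩, ⟨c₂, hc₂⟩, -⟩ := hG.1.2.2.2.2.2.2.2.1 p q
  have hc : (c₁ : G) * p = c₂ * q := congrArg Subtype.val (hc₁.trans hc₂.symm)
  refine ⟨c₁, c₁.2, ?_⟩
  rw [← mul_assoc, hc, mul_inv_cancel_right]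
  exact c₂.2

lemma exists_mul_mem_mul_mem (hG : IsGarsideGroup P Δ) (a b : G) :
    ∃ z ∈ P, z * a ∈ P ∧ z * b ∈ P := by
  obtain ⟨w₁, hw₁, hw₁a⟩ := exists_mul_mem hG a
  obtain ⟨w₂, hw₂, hw₂b⟩ := exists_mul_mem hG (w₁ * b)
  refine ⟨w₂ * w₁, mul_mem hw₂ hw₁, ?_, ?_⟩
  · rw [mul_assoc]; exact mul_mem hw₂ hw₁a
  · rwa [mul_assoc]

/-- A lower bound `c` of `p` and `q` in `G` becomes positive after left multiplication by a
positive `w`, and `w * d` is a left gcd of `w * p` and `w * q`. -/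
lemma gdvdL_iff_of_isGlbL (hG : IsGarsideGroup P Δ) {p q d : P} (hd : IsGlbL p q d) (c : G) :
    gdvdL P c d ↔ gdvdL P c p ∧ gdvdL P c q := by
  refine ⟨fun hcd => ⟨hcd.trans (gdvdL_coe_iff.2 hd.1), hcd.trans (gdvdL_coe_iff.2 hd.2.1)⟩, ?_⟩
  rintro ⟨hcp, hcq⟩
  obtain ⟨w, hw, hwc⟩ := exists_mul_mem hG c
  have hwd := hd.mul_left hG.1.2.1 hG.1.2.2.2.2.1 ⟨w, hw⟩
  rw [← gdvdL_mul_left_iff w] at hcp hcq ⊢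
  exact gdvdL_coe_iff (p := ⟨w * c, hwc⟩) (q := ⟨w, hw⟩ * d) |>.2 <|
    hwd.2.2 _ (gdvdL_coe_iff.1 hcp) (gdvdL_coe_iff.1 hcq)

lemma exists_gdvdL_iff_and (hG : IsGarsideGroup P Δ) (a b : G) :
    ∃ d, ∀ c, gdvdL P c d ↔ gdvdL P c a ∧ gdvdL P c b := by
  obtain ⟨z, -, hza, hzb⟩ := exists_mul_mem_mul_mem hG a b
  obtain ⟨d, hd⟩ := hG.1.2.2.2.2.1 ⟨z * a, hza⟩ ⟨z * b, hzb⟩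
  refine ⟨z⁻¹ * d, fun c => ?_⟩
  rw [← gdvdL_mul_left_iff z, mul_inv_cancel_left, gdvdL_iff_of_isGlbL hG hd]
  simp only [gdvdL_mul_left_iff]

lemma exists_gdvdL_iff_forall_lt (hG : IsGarsideGroup P Δ) (f : ℕ → G) {n : ℕ} (hn : 1 ≤ n) :
    ∃ d, ∀ c, gdvdL P c d ↔ ∀ i < n, gdvdL P c (f i) := by
  induction n, hn using Nat.le_induction with
  | base => exact ⟨f 0, fun c => by simp⟩
  | succ n _ ih =>
    obtain ⟨d, hd⟩ := ih
    obtain ⟨e, he⟩ := exists_gdvdL_iff_and hG d (f n)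
    exact ⟨e, fun c => by rw [he, hd, Nat.forall_lt_succ_right]⟩

/-- The conjugating element is the meet `c` of `f i = x ^ i * Δ ^ (-q * i)` for `i < n`: the map
`y ↦ x * y * Δ ^ (-q)` sends `f i` to `f (i + 1)`, and the new last term `f n` is `≥ 1 = f 0`,
so `c * Δ ^ q ≤ x * c`. -/
lemma exists_isConj_zpow_gdvdL_of_zpow_mul_gdvdL_pow (hG : IsGarsideGroup P Δ) {x : G} {q : ℤ}
    {n : ℕ} (hn : 1 ≤ n) (hx : gdvdL P (Δ ^ (q * n)) (x ^ n)) :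
    ∃ y, IsConj x y ∧ gdvdL P (Δ ^ q) y := by
  let f : ℕ → G := fun i => x ^ i * Δ ^ (-(q * i))
  have hf_succ (i : ℕ) : x * f i = f (i + 1) * Δ ^ q := by
    simp only [f, pow_succ', mul_assoc, ← zpow_add]
    congr 3
    push_cast
    ring
  obtain ⟨c, hc⟩ := exists_gdvdL_iff_forall_lt hG f hn
  have hcf : ∀ i ≤ n, gdvdL P c (f i) := by
    intro i hi
    rcases hi.lt_or_eq with hi | rfl
    · exact (hc c).1 (gdvdL_refl c) i hi
    · have hc1 : gdvdL P c 1 := by simpa [f] using (hc c).1 (gdvdL_refl c) 0 hn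
      exact hc1.trans (by simpa [f] using hx.mul_zpow_right hG (-(q * i)))
  refine ⟨c⁻¹ * x * c, isConj_iff.2 ⟨c⁻¹, by group⟩, ?_⟩
  rw [← gdvdL_mul_left_iff (x⁻¹ * c), show x⁻¹ * c * (c⁻¹ * x * c) = c by group]
  refine (hc _).2 fun i hi => ?_
  rw [← gdvdL_mul_left_iff x, hf_succ, show x * (x⁻¹ * c * Δ ^ q) = c * Δ ^ q by group]
  exact (hcf (i + 1) hi).mul_zpow_right hG q

lemma IsConj.inv {a b : G} (h : IsConj a b) : IsConj a⁻¹ b⁻¹ := by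
  obtain ⟨c, rfl⟩ := isConj_iff.1 h
  exact isConj_iff.2 ⟨c, by group⟩

/-- `inf_s g` and `sup_s g` are the greatest element of `summitInfSet P Δ g` and the least
element of `summitSupSet P Δ g`. -/
def summitInfSet (P : Submonoid G) (Δ g : G) : Set ℤ := {t | ∃ h, IsConj g h ∧ gdvdL P (Δ ^ t) h}

def summitSupSet (P : Submonoid G) (Δ g : G) : Set ℤ := {t | ∃ h, IsConj g h ∧ gdvdL P h (Δ ^ t)}

lemma mem_summitInfSet_of_le (hG : IsGarsideGroup P Δ) {g : G} {j t : ℤ}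
    (ht : t ∈ summitInfSet P Δ g) (hjt : j ≤ t) : j ∈ summitInfSet P Δ g :=
  let ⟨h, hgh, hth⟩ := ht
  ⟨h, hgh, (gdvdL_zpow_of_le hG hjt).trans hth⟩

lemma mul_mem_summitInfSet_pow_iff (hG : IsGarsideGroup P Δ) {g : G} {n : ℕ} (hn : 1 ≤ n)
    {q : ℤ} : q * n ∈ summitInfSet P Δ (g ^ n) ↔ q ∈ summitInfSet P Δ g := by
  refine ⟨fun ⟨h, hgh, hqh⟩ => ?_, fun ⟨h, hgh, hqh⟩ => ⟨h ^ n, hgh.pow n, hqh.zpow_mul_pow hG n⟩⟩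
  obtain ⟨z, rfl⟩ := isConj_iff.1 hgh
  rw [← conj_pow] at hqh
  obtain ⟨y, hy, hqy⟩ := exists_isConj_zpow_gdvdL_of_zpow_mul_gdvdL_pow hG hn hqh
  exact ⟨y, (isConj_iff.2 ⟨z, rfl⟩).trans hy, hqy⟩

lemma summitInfSet_eq_Iic (hG : IsGarsideGroup P Δ) {g : G} {n : ℕ} (hn : 1 ≤ n) {m : ℤ}
    (hm : IsGreatest (summitInfSet P Δ (g ^ n)) m) :
    summitInfSet P Δ g = Set.Iic ⌊(m : ℚ) / n⌋ := by
  ext q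
  rw [Set.mem_Iic, Int.le_floor, le_div_iff₀ (by positivity), ← mul_mem_summitInfSet_pow_iff hG hn]
  norm_cast
  exact ⟨fun h => hm.2 h, fun h => mem_summitInfSet_of_le hG hm.1 h⟩

lemma summitSupSet_eq_neg_summitInfSet_inv (hG : IsGarsideGroup P Δ) (g : G) :
    summitSupSet P Δ g = -summitInfSet P Δ g⁻¹ := by
  ext t
  simp only [Set.mem_neg, summitSupSet, summitInfSet]
  refine ⟨fun ⟨h, hgh, hht⟩ => ⟨h⁻¹, hgh.inv, ?_⟩, fun ⟨h, hgh, hth⟩ => ⟨h⁻¹, ?_, ?_⟩⟩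
  · exact (gdvdL_zpow_iff_zpow_neg_gdvdL_inv hG).1 hht
  · simpa using hgh.inv
  · rwa [gdvdL_zpow_iff_zpow_neg_gdvdL_inv hG, inv_inv]

lemma summitSupSet_eq_Ici (hG : IsGarsideGroup P Δ) {g : G} {n : ℕ} (hn : 1 ≤ n) {u : ℤ}
    (hu : IsLeast (summitSupSet P Δ (g ^ n)) u) :
    summitSupSet P Δ g = Set.Ici ⌈(u : ℚ) / n⌉ := by
  rw [summitSupSet_eq_neg_summitInfSet_inv hG, ← inv_pow] at hu
  have hu' : IsGreatest (summitInfSet P Δ (g⁻¹ ^ n)) (-u) :=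
    ⟨hu.1, fun t ht => le_neg.2 (hu.2 (by simpa using ht))⟩
  rw [summitSupSet_eq_neg_summitInfSet_inv hG, summitInfSet_eq_Iic hG hn hu', Set.neg_Iic,
    Int.cast_neg, neg_div, Int.floor_neg, neg_neg]

end GarsideGroup

/-- **Corollary 6.2.** `inf_s(g) = ⌊inf_s(gⁿ)/n⌋` and `sup_s(g) = ⌈sup_s(gⁿ)/n⌉`;
in particular `inf_s(g) ≥ 0` iff `inf_s(gⁿ) ≥ 0`, and `sup_s(g) ≤ 0` iff
`sup_s(gⁿ) ≤ 0`. -/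
theorem infs_sups_floor_ceil {G : Type*} [Group G] (P : Submonoid G) (Δ : G)
    (hG : IsGarsideGroup P Δ) (g : G) (n : ℕ) (hn : 1 ≤ n) (r m s u : ℤ)
    (hr : IsGreatest {t : ℤ | ∃ h : G, IsConj g h ∧ gdvdL P (Δ ^ t) h} r)
    (hm : IsGreatest {t : ℤ | ∃ h : G, IsConj (g ^ n) h ∧ gdvdL P (Δ ^ t) h} m)
    (hs : IsLeast {t : ℤ | ∃ h : G, IsConj g h ∧ gdvdL P h (Δ ^ t)} s)
    (hu : IsLeast {t : ℤ | ∃ h : G, IsConj (g ^ n) h ∧ gdvdL P h (Δ ^ t)} u) :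
    r = ⌊(m : ℚ) / (n : ℚ)⌋ ∧ s = ⌈(u : ℚ) / (n : ℚ)⌉ ∧
    (0 ≤ r ↔ 0 ≤ m) ∧ (s ≤ 0 ↔ u ≤ 0) := by
  have hnQ : (0 : ℚ) < n := by exact_mod_cast hn
  have hinf : IsGreatest (summitInfSet P Δ g) ⌊(m : ℚ) / n⌋ :=
    summitInfSet_eq_Iic hG hn hm ▸ isGreatest_Iic
  have hsup : IsLeast (summitSupSet P Δ g) ⌈(u : ℚ) / n⌉ :=
    summitSupSet_eq_Ici hG hn hu ▸ isLeast_Ici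
  have hrm : r = ⌊(m : ℚ) / n⌋ := hr.unique hinf
  have hsu : s = ⌈(u : ℚ) / n⌉ := hs.unique hsup
  refine ⟨hrm, hsu, ?_, ?_⟩
  · rw [hrm, Int.le_floor, Int.cast_zero, le_div_iff₀ hnQ, zero_mul]
    norm_cast
  · rw [hsu, Int.ceil_le, Int.cast_zero, div_le_iff₀ hnQ, zero_mul]
    norm_cast
end

section
/- Let G be a group, n ≥ 1 and g ∈ G. (i) There exists x ∈ G with xⁿ = g if and only if there exists h ∈ G such that δ¹(g,1,…,1) is conjugate in G(n) to δ¹(h,h,…,h). (ii) If δ¹(g,1,…,1) = γ⁻¹·δ¹(h,…,h)·γ for some h ∈ G and some γ = δ^k(x₁,…,xₙ) ∈ G(n), then g = (xₙ⁻¹·h·xₙ)ⁿ. -/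
/-- `G(n) = ℤ ⋉ Gⁿ`: the element `δ^k(g₁,…,gₙ)` is recorded as the pair of `k : ℤ`
and the tuple `v : ZMod n → G` (index `j ∈ {1,…,n}` of the paper corresponds to
`j - 1 : ZMod n`). -/
structure Gn (G : Type*) (n : ℕ) where
  k : ℤ
  v : ZMod n → G

namespace Gn

variable {G : Type*} [Group G] {n : ℕ}

protected def gmul (p q : Gn G n) : Gn G n :=
  ⟨p.k + q.k, fun i => p.v (i - (q.k : ZMod n)) * q.v i⟩

protected def gone : Gn G n := ⟨0, fun _ => 1⟩

protected def ginv (p : Gn G n) : Gn G n :=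
  ⟨-p.k, fun i => (p.v (i + (p.k : ZMod n)))⁻¹⟩

protected lemma gmul_assoc (p q r : Gn G n) :
    Gn.gmul (Gn.gmul p q) r = Gn.gmul p (Gn.gmul q r) := by
  simp only [Gn.gmul, mk.injEq]
  constructor
  · ring
  · funext i
    simp only [Int.cast_add]
    rw [show i - ((q.k : ZMod n) + (r.k : ZMod n)) = i - (r.k : ZMod n) - (q.k : ZMod n) by ring]
    rw [mul_assoc]

protected lemma gone_mul (p : Gn G n) : Gn.gmul Gn.gone p = p := by
  simp only [Gn.gmul, Gn.gone]
  simp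

protected lemma gmul_one (p : Gn G n) : Gn.gmul p Gn.gone = p := by
  simp only [Gn.gmul, Gn.gone]
  simp

protected lemma ginv_mul_cancel (p : Gn G n) : Gn.gmul (Gn.ginv p) p = Gn.gone := by
  simp only [Gn.gmul, Gn.ginv, Gn.gone, mk.injEq]
  constructor
  · ring
  · funext i
    simp

/-- The group structure of `G(n) = ℤ ⋉ Gⁿ`, where `ℤ = ⟨δ⟩` acts on `Gⁿ` by the
cyclic coordinate shift: `δ^k(u) · δ^m(v) = δ^{k+m}(u^{δ^m} · v)`. -/
instance : Group (Gn G n) where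
  mul := Gn.gmul
  one := Gn.gone
  inv := Gn.ginv
  mul_assoc := Gn.gmul_assoc
  one_mul := Gn.gone_mul
  mul_one := Gn.gmul_one
  inv_mul_cancel := Gn.ginv_mul_cancel

@[simp] lemma mul_k (p q : Gn G n) : (p * q).k = p.k + q.k := rfl
@[simp] lemma mul_v (p q : Gn G n) (i : ZMod n) :
    (p * q).v i = p.v (i - (q.k : ZMod n)) * q.v i := rfl
@[simp] lemma one_k : (1 : Gn G n).k = 0 := rfl
@[simp] lemma one_v (i : ZMod n) : (1 : Gn G n).v i = 1 := rfl

end Gn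


namespace Gn

variable {G : Type*} [Group G] {n : ℕ}

@[simp] lemma inv_k (p : Gn G n) : (p⁻¹).k = -p.k := rfl
@[simp] lemma inv_v (p : Gn G n) (i : ZMod n) :
    (p⁻¹).v i = (p.v (i + (p.k : ZMod n)))⁻¹ := rfl

lemma ext' {p q : Gn G n} (hk : p.k = q.k) (hv : p.v = q.v) : p = q := by
  cases p; cases q; simp_all

end Gn

/-- The coordinatewise conjugation identities imply `g = (xₙ⁻¹ h xₙ)ⁿ`. -/
lemma key_lemma {G : Type*} [Group G] {n : ℕ} (hn : 1 ≤ n) (g h : G) (xs : ZMod n → G)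
    (H : ∀ i : ZMod n, (if i = 0 then g else 1) = (xs (i - 1))⁻¹ * h * xs i) :
    g = ((xs (-1))⁻¹ * h * xs (-1)) ^ n := by
  haveI : NeZero n := ⟨by omega⟩
  have step : ∀ j : ℕ, j < n → xs ((j : ZMod n)) = (h ^ j)⁻¹ * xs 0 := by
    intro j
    induction j with
    | zero => simp
    | succ j ih =>
      intro hj
      have hj' := ih (by omega)
      have hne : (((j + 1 : ℕ)) : ZMod n) ≠ 0 := by
        rw [Ne, ZMod.natCast_eq_zero_iff]
        exact fun hd => absurd (Nat.le_of_dvd (by omega) hd) (by omega)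
      have hH := H (((j + 1 : ℕ)) : ZMod n)
      rw [if_neg hne] at hH
      have h1 : (((j + 1 : ℕ)) : ZMod n) - 1 = (j : ZMod n) := by push_cast; ring
      rw [h1, hj'] at hH
      have : xs (((j + 1 : ℕ)) : ZMod n) = h⁻¹ * ((h ^ j)⁻¹ * xs 0) := by
        have := hH.symm
        calc xs (((j + 1 : ℕ)) : ZMod n)
            = (((h ^ j)⁻¹ * xs 0)⁻¹ * h)⁻¹ *
              ((((h ^ j)⁻¹ * xs 0)⁻¹ * h) * xs (((j + 1 : ℕ)) : ZMod n)) := by group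
          _ = (((h ^ j)⁻¹ * xs 0)⁻¹ * h)⁻¹ * 1 := by rw [← hH]
          _ = h⁻¹ * ((h ^ j)⁻¹ * xs 0) := by group
      rw [this, pow_succ]
      group
  have hm1 : (-1 : ZMod n) = ((n - 1 : ℕ) : ZMod n) := by
    have hs : ((n : ℕ) : ZMod n) = 0 := ZMod.natCast_self n
    rw [Nat.cast_sub hn, hs]; push_cast; ring
  have hx : xs (-1) = (h ^ (n - 1))⁻¹ * xs 0 := by rw [hm1]; exact step (n - 1) (by omega)
  have h0 := H 0
  rw [if_pos rfl, zero_sub] at h0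
  have hpow : h ^ (n - 1) * h = h ^ n := by
    conv_rhs => rw [show n = (n - 1) + 1 by omega]
    rw [pow_succ]
  calc g = (xs (-1))⁻¹ * h * xs 0 := h0
    _ = (xs (-1))⁻¹ * h ^ n * xs (-1) := by
        have hx0 : xs 0 = h ^ (n - 1) * xs (-1) := by rw [hx]; group
        have hh : h * h ^ (n - 1) = h ^ n := by rw [← pow_succ']; congr 1; omega
        rw [hx0, ← hh]; group
    _ = ((xs (-1))⁻¹ * h * xs (-1)) ^ n := by
        have := conj_pow (i := n) (a := (xs (-1))⁻¹) (b := h)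
        rw [inv_inv] at this
        rw [this]

/-- **Theorem 8.3.** `g` has an `n`-th root in `G` if and only if `δ(g,1,…,1)` is
conjugate in `G(n)` to an element of the form `δ(h,…,h)`; and if
`δ(g,1,…,1) = γ⁻¹·δ(h,…,h)·γ` with `γ = δ^k(x₁,…,xₙ)`, then `g = (xₙ⁻¹·h·xₙ)ⁿ`.
(Here the paper's index `j ∈ {1,…,n}` corresponds to `j - 1 : ZMod n`, so
`xₙ` is the coordinate at index `-1 : ZMod n`.) -/
theorem root_via_gn {G : Type*} [Group G] (n : ℕ) (hn : 1 ≤ n) (g : G) :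
    ((∃ x : G, x ^ n = g) ↔
      ∃ h : G, IsConj (Gn.mk 1 (fun i => if i = 0 then g else 1) : Gn G n)
        (Gn.mk 1 (fun _ => h))) ∧
    (∀ (h : G) (k : ℤ) (xs : ZMod n → G),
      (Gn.mk 1 (fun i => if i = 0 then g else 1) : Gn G n) =
        (Gn.mk k xs)⁻¹ * Gn.mk 1 (fun _ => h) * Gn.mk k xs →
      g = ((xs (-1))⁻¹ * h * xs (-1)) ^ n) := by
  haveI : NeZero n := ⟨by omega⟩
  have part2 : ∀ (h : G) (k : ℤ) (xs : ZMod n → G),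
      (Gn.mk 1 (fun i => if i = 0 then g else 1) : Gn G n) =
        (Gn.mk k xs)⁻¹ * Gn.mk 1 (fun _ => h) * Gn.mk k xs →
      g = ((xs (-1))⁻¹ * h * xs (-1)) ^ n := by
    intro h k xs heq
    apply key_lemma hn g h xs
    intro i
    have hv := congrFun (congrArg Gn.v heq) i
    simp only [Gn.mul_v, Gn.mul_k, Gn.inv_v, Gn.inv_k] at hv
    push_cast at hv
    rw [show i - (k : ZMod n) - 1 + (k : ZMod n) = i - 1 by ring] at hv
    exact hv
  refine ⟨⟨?_, ?_⟩, part2⟩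
  · rintro ⟨x, rfl⟩
    refine ⟨x, isConj_iff.mpr ⟨Gn.mk 0 (fun j => (x ^ j.val)⁻¹), ?_⟩⟩
    apply Gn.ext'
    · simp
    · funext i
      simp only [Gn.mul_v, Gn.mul_k, Gn.inv_v, Gn.inv_k]
      push_cast
      simp only [sub_zero, add_zero, neg_zero]
      by_cases hi : i = 0
      · subst hi
        have hm1 : (-1 : ZMod n) = ((n - 1 : ℕ) : ZMod n) := by
          have hs : ((n : ℕ) : ZMod n) = 0 := ZMod.natCast_self n
          rw [Nat.cast_sub hn, hs]; push_cast; ring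
        rw [if_pos rfl, zero_sub, hm1, ZMod.val_natCast_of_lt (by omega),
          ZMod.val_zero, pow_zero]
        have : x ^ (n - 1) * x = x ^ n := by
          conv_rhs => rw [show n = (n - 1) + 1 by omega]
          rw [pow_succ]
        rw [← this]
        group
      · rw [if_neg hi]
        have hval : 1 ≤ i.val := by
          rcases Nat.eq_zero_or_pos i.val with h0 | h0
          · exact absurd ((ZMod.val_eq_zero i).mp h0) hi
          · exact h0
        have hsub : i - 1 = ((i.val - 1 : ℕ) : ZMod n) := by
          rw [Nat.cast_sub hval, Nat.cast_one, ZMod.natCast_val, ZMod.cast_id]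
        rw [hsub, ZMod.val_natCast_of_lt (by have := ZMod.val_lt i; omega)]
        have : x ^ (i.val - 1) * x = x ^ i.val := by
          conv_rhs => rw [show i.val = (i.val - 1) + 1 by omega]
          rw [pow_succ]
        rw [← this]
        group
  · rintro ⟨h, hc⟩
    obtain ⟨c, hc'⟩ := isConj_iff.mp hc
    obtain ⟨k, xs⟩ := c
    refine ⟨(xs (-1))⁻¹ * h * xs (-1), (part2 h k xs ?_).symm⟩
    rw [← hc']
    group
end
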